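/- arXiv:solv-int/9511004 — 9 statements merged into one kernel-verified Lean document; each statement's English description precedes it below -/
import Mathlib

section
/- Let p ≥ 1 and let u : ℤ → (ℕ → ℝ) assign to each grid index α a sequence of 'finite-difference derivatives' u α J, and let h : ℤ → ℝ be step sizes. Suppose for every α and every J ≤ p the forward relation u (α+1) J = u α J + ∑_{k=1}^{p-J} (ε^k / k!) * (h α)^k * u α (J+k) + o(ε^{p-J}) holds as ε → 0. Then for any β ≥ 1 and J ≤ p, u (α+β) J = u α J + ∑_{k=1}^{p-J} (ε^k / k!) * (H α β)^k * u α (J+k) + o(ε^{p-J}), where H α β = ∑_{i=α}^{α+β-1} h i. -/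
open Filter Finset

/-!
Write `T_H c = ∑_{k ≤ n} ε^k H^k / k! · c k` for the order-`n` expansion of a shift by `ε H` of a
point whose finite-difference derivatives are `c`. By the binomial theorem these truncated shifts
compose exactly, `T_h (k ↦ T_H (c (k + ·)) at order n - k) = T_{h + H} c`, because the truncation
orders of the inner shifts are exactly complementary to the powers `ε^k` multiplying them. Hence
"`b = T_H a + o(ε^(p-J))` for all `J ≤ p`" is transitive with additive step sizes: the error of the
inner shift at derivative order `J + k` is `o(ε^(p-J-k))` and gets multiplied by `ε^k`. Induction
on `β` then accumulates the one-step relations into the step `H α β`.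
-/

open Asymptotics Topology
open scoped Nat

noncomputable def taylorShift (n : ℕ) (ε H : ℝ) (c : ℕ → ℝ) : ℝ :=
  ∑ k ∈ range (n + 1), ε ^ k / k ! * H ^ k * c k

lemma taylorShift_eq_add_sum_Icc (n : ℕ) (ε H : ℝ) (c : ℕ → ℝ) :
    taylorShift n ε H c = c 0 + ∑ k ∈ Icc 1 n, ε ^ k / k ! * H ^ k * c k := by
  rw [taylorShift, Nat.range_succ_eq_Icc_zero, ← add_sum_Ioc_eq_sum_Icc n.zero_le,
    ← Icc_add_one_left_eq_Ioc]
  simp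

lemma taylorShift_zero_step (n : ℕ) (ε : ℝ) (c : ℕ → ℝ) : taylorShift n ε 0 c = c 0 := by
  rw [taylorShift_eq_add_sum_Icc, add_eq_left]
  exact sum_eq_zero fun k hk => by simp [zero_pow (by grind : k ≠ 0)]

lemma taylorShift_sub (n : ℕ) (ε H : ℝ) (c d : ℕ → ℝ) :
    taylorShift n ε H c - taylorShift n ε H d = taylorShift n ε H (fun k => c k - d k) := by
  simp only [taylorShift, ← sum_sub_distrib, mul_sub]

lemma add_pow_div_factorial (x y : ℝ) (m : ℕ) :
    (x + y) ^ m / m ! = ∑ k ∈ range (m + 1), x ^ k / k ! * (y ^ (m - k) / (m - k)!) := by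
  rw [add_pow, sum_div]
  refine sum_congr rfl fun k hk => ?_
  rw [Nat.cast_choose ℝ (Nat.lt_succ_iff.mp (mem_range.mp hk))]
  field_simp

lemma taylorShift_add (n : ℕ) (ε h H : ℝ) (c : ℕ → ℝ) :
    taylorShift n ε (h + H) c =
      taylorShift n ε h (fun k => taylorShift (n - k) ε H (fun j => c (k + j))) := by
  have hsplit (m : ℕ) : ε ^ m / m ! * (h + H) ^ m * c m = ∑ k ∈ range (m + 1),
      ε ^ k / k ! * h ^ k * (ε ^ (m - k) / (m - k)! * H ^ (m - k) * c (k + (m - k))) := by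
    rw [show ε ^ m / m ! * (h + H) ^ m * c m = (h + H) ^ m / m ! * (ε ^ m * c m) by ring,
      add_pow_div_factorial, sum_mul]
    refine sum_congr rfl fun k hk => ?_
    obtain ⟨j, rfl⟩ := Nat.exists_eq_add_of_le (Nat.lt_succ_iff.mp (mem_range.mp hk))
    rw [Nat.add_sub_cancel_left]
    ring
  simp only [taylorShift, mul_sum, hsplit]
  rw [sum_range_diag_flip (n + 1) fun k j =>
    ε ^ k / k ! * h ^ k * (ε ^ j / j ! * H ^ j * c (k + j))]
  refine sum_congr rfl fun k hk => ?_
  rw [show n + 1 - k = n - k + 1 by grind]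

lemma isLittleO_taylorShift {l : Filter ℝ} {n : ℕ} (H : ℝ) {e : ℕ → ℝ → ℝ}
    (he : ∀ k ≤ n, e k =o[l] fun ε => ε ^ (n - k)) :
    (fun ε => taylorShift n ε H (e · ε)) =o[l] fun ε => ε ^ n := by
  refine IsLittleO.fun_sum fun k hk => ?_
  have hkn : k ≤ n := Nat.lt_succ_iff.mp (mem_range.mp hk)
  have hterm := ((isBigO_refl (fun ε : ℝ => ε ^ k) l).mul_isLittleO (he k hkn)).const_mul_left
    (H ^ k / k !)
  simp only [← pow_add, Nat.add_sub_cancel' hkn] at hterm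
  exact hterm.congr_left fun ε => by ring

/-- `b` is, to order `p`, the shift of `a` by the step `H`; in the paper's notation `a = u α`,
`b = u (α + β)` and `H = H α β`. -/
def IsTaylorShift (p : ℕ) (H : ℝ) (a b : ℕ → ℝ) : Prop :=
  ∀ J ≤ p, (fun ε => b J - taylorShift (p - J) ε H (fun k => a (J + k))) =o[𝓝[≠] 0]
    fun ε => ε ^ (p - J)

namespace IsTaylorShift

lemma refl (p : ℕ) (a : ℕ → ℝ) : IsTaylorShift p 0 a a := fun J _ => by
  simp [taylorShift_zero_step]

variable {p : ℕ} {h H : ℝ} {a b c : ℕ → ℝ}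

lemma trans (hab : IsTaylorShift p H a b) (hbc : IsTaylorShift p h b c) :
    IsTaylorShift p (h + H) a c := by
  intro J hJ
  have hrest := isLittleO_taylorShift (l := 𝓝[≠] 0) (n := p - J) h
    (e := fun k ε => b (J + k) - taylorShift (p - J - k) ε H (fun j => a (J + k + j)))
    fun k hk => by simpa [Nat.sub_sub] using hab (J + k) (by omega)
  refine ((hbc J hJ).add hrest).congr_left fun ε => ?_
  rw [taylorShift_add, ← taylorShift_sub]
  simp only [add_assoc]
  ring

end IsTaylorShift

lemma tendsto_div_pow_iff_isLittleO (f : ℝ → ℝ) (n : ℕ) :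
    Tendsto (fun ε => f ε / ε ^ n) (𝓝[≠] 0) (𝓝 0) ↔ f =o[𝓝[≠] 0] fun ε => ε ^ n :=
  (isLittleO_iff_tendsto' <| eventually_mem_nhdsWithin.mono fun _ hε h0 =>
    absurd h0 (pow_ne_zero n hε)).symm

lemma isTaylorShift_iff {p : ℕ} {H : ℝ} {a b : ℕ → ℝ} :
    IsTaylorShift p H a b ↔ ∀ J ≤ p, Tendsto (fun ε : ℝ =>
      (b J - a J - ∑ k ∈ Icc 1 (p - J), ε ^ k / k ! * H ^ k * a (J + k)) / ε ^ (p - J))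
        (𝓝[≠] 0) (𝓝 0) := by
  simp only [tendsto_div_pow_iff_isLittleO, IsTaylorShift, taylorShift_eq_add_sum_Icc, add_zero,
    sub_add_eq_sub_sub]

lemma isTaylorShift_sum_Icc {p : ℕ} {u : ℤ → ℕ → ℝ} {h : ℤ → ℝ}
    (hstep : ∀ γ, IsTaylorShift p (h γ) (u γ) (u (γ + 1))) (α : ℤ) :
    ∀ β : ℕ, IsTaylorShift p (∑ i ∈ Icc α (α + β - 1), h i) (u α) (u (α + β))
  | 0 => by simpa using IsTaylorShift.refl p (u α)
  | β + 1 => by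
    have hIcc : Icc α (α + ↑(β + 1) - 1) = insert (α + β) (Icc α (α + β - 1)) := by
      ext; simp only [mem_Icc, mem_insert]; omega
    rw [hIcc, sum_insert (by simp), Nat.cast_succ, ← add_assoc]
    exact (isTaylorShift_sum_Icc hstep α β).trans (hstep _)

theorem fd_expansion_forward_general
    (p : ℕ)
    (u : ℤ → ℕ → ℝ) (h : ℤ → ℝ)
    (hyp : ∀ α : ℤ, ∀ J : ℕ, J ≤ p →
      Tendsto (fun ε : ℝ =>
          (u (α + 1) J - u α J -
            ∑ k ∈ Finset.Icc 1 (p - J),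
              ε ^ k / (Nat.factorial k : ℝ) * (h α) ^ k * u α (J + k)) / ε ^ (p - J))
        (nhdsWithin 0 {0}ᶜ) (nhds 0)) :
    ∀ α : ℤ, ∀ β : ℕ, 1 ≤ β → ∀ J : ℕ, J ≤ p →
      Tendsto (fun ε : ℝ =>
          (u (α + β) J - u α J -
            ∑ k ∈ Finset.Icc 1 (p - J),
              ε ^ k / (Nat.factorial k : ℝ) *
                (∑ i ∈ Finset.Icc α (α + β - 1), h i) ^ k * u α (J + k)) / ε ^ (p - J))
        (nhdsWithin 0 {0}ᶜ) (nhds 0) := fun α β _ =>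
  isTaylorShift_iff.1 <| isTaylorShift_sum_Icc (fun γ => isTaylorShift_iff.2 (hyp γ)) α β

/-- Lemma 1 (forward case): one-step little-o Taylor-like expansion relations for
finite-difference derivatives propagate to multi-step expansions with the
accumulated step size `H α β = ∑_{i=α}^{α+β-1} h i`. -/
theorem fd_expansion_forward
    (p : ℕ) (hp : 1 ≤ p)
    (u : ℤ → ℕ → ℝ) (h : ℤ → ℝ)
    (hyp : ∀ α : ℤ, ∀ J : ℕ, J ≤ p →
      Tendsto (fun ε : ℝ =>
          (u (α + 1) J - u α J -
            ∑ k ∈ Finset.Icc 1 (p - J),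
              ε ^ k / (Nat.factorial k : ℝ) * (h α) ^ k * u α (J + k)) / ε ^ (p - J))
        (nhdsWithin 0 {0}ᶜ) (nhds 0)) :
    ∀ α : ℤ, ∀ β : ℕ, 1 ≤ β → ∀ J : ℕ, J ≤ p →
      Tendsto (fun ε : ℝ =>
          (u (α + β) J - u α J -
            ∑ k ∈ Finset.Icc 1 (p - J),
              ε ^ k / (Nat.factorial k : ℝ) *
                (∑ i ∈ Finset.Icc α (α + β - 1), h i) ^ k * u α (J + k)) / ε ^ (p - J))
        (nhdsWithin 0 {0}ᶜ) (nhds 0) :=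
  fd_expansion_forward_general p u h hyp
end

section
/- With L^{(l)}_{(n)} defined as the coefficient of a^l in (∑_{i≥1} (aⁱ/i!) u⁽ⁱ⁾)^n, and with S = ∑_J u⁽ᴶ⁺¹⁾ ∂_{u⁽ᴶ⁾} the shift derivation acting on L^{(k)}_{(n)} viewed as a polynomial in the variables u⁽¹⁾, u⁽²⁾, …, the following recursion holds for all k ≥ 0 and n ≥ 1: n u⁽¹⁾ L^{(k)}_{(n−1)} + S(L^{(k)}_{(n)}) = (k+1) L^{(k+1)}_{(n)}. -/
open Finset

/-- The polynomial `L^{(l)}_{(n)} = ∑_{l₁+⋯+l_n=l, lᵢ≥1} ∏ᵢ u⁽ˡⁱ⁾/lᵢ!` in the ring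
`ℝ[u⁽¹⁾, u⁽²⁾, …]`, where the variable `i` of `MvPolynomial ℕ ℝ` stands for `u⁽ⁱ⁾`. -/
noncomputable def Lpoly (l n : ℕ) : MvPolynomial ℕ ℝ :=
  ∑ f ∈ (Finset.Nat.antidiagonalTuple n l).filter (fun f => ∀ i, 1 ≤ f i),
    ∏ i, (MvPolynomial.C ((Nat.factorial (f i) : ℝ)⁻¹) * MvPolynomial.X (f i))

/-- The shift derivation `S = ∑_J u⁽ᴶ⁺¹⁾ ∂_{u⁽ᴶ⁾}`, sending `u⁽ᴶ⁾ ↦ u⁽ᴶ⁺¹⁾`. -/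
noncomputable def shiftDer : Derivation ℝ (MvPolynomial ℕ ℝ) (MvPolynomial ℕ ℝ) :=
  MvPolynomial.mkDerivation ℝ (fun i => MvPolynomial.X (i + 1))

namespace LpolyAux

/-- The index set: tuples of `N` positive integers summing to `l`. -/
def Aset (N l : ℕ) : Finset (Fin N → ℕ) :=
  (Finset.Nat.antidiagonalTuple N l).filter (fun f => ∀ i, 1 ≤ f i)

lemma mem_Aset {N l : ℕ} {f : Fin N → ℕ} :
    f ∈ Aset N l ↔ (∑ i, f i) = l ∧ ∀ i, 1 ≤ f i := by
  rw [Aset, Finset.mem_filter, Finset.Nat.mem_antidiagonalTuple]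

/-- The weight of a tuple. -/
noncomputable def wgt {N : ℕ} (f : Fin N → ℕ) : MvPolynomial ℕ ℝ :=
  ∏ i, (MvPolynomial.C ((Nat.factorial (f i) : ℝ)⁻¹) * MvPolynomial.X (f i))

lemma Lpoly_eq (l n : ℕ) : Lpoly l n = ∑ f ∈ Aset n l, wgt f := rfl

private lemma deriv_prod {ι : Type*} [DecidableEq ι]
    (D : Derivation ℝ (MvPolynomial ℕ ℝ) (MvPolynomial ℕ ℝ))
    (s : Finset ι) (g : ι → MvPolynomial ℕ ℝ) :
    D (∏ i ∈ s, g i) = ∑ j ∈ s, (∏ i ∈ s.erase j, g i) * D (g j) := by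
  induction s using Finset.induction_on with
  | empty => simp
  | @insert a s ha ih =>
    rw [Finset.prod_insert ha, Derivation.leibniz, ih, Finset.sum_insert ha,
      Finset.erase_insert ha, smul_eq_mul, smul_eq_mul, Finset.mul_sum, add_comm]
    congr 1
    refine Finset.sum_congr rfl fun j hj => ?_
    rw [Finset.erase_insert_of_ne (by rintro rfl; exact ha hj),
      Finset.prod_insert (fun h => ha (Finset.mem_of_mem_erase h)), mul_assoc]

private lemma shiftDer_C_mul_X (a : ℝ) (i : ℕ) :
    shiftDer (MvPolynomial.C a * MvPolynomial.X i)
      = MvPolynomial.C a * MvPolynomial.X (i + 1) := by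
  rw [← MvPolynomial.smul_eq_C_mul, ← MvPolynomial.smul_eq_C_mul, Derivation.map_smul,
    shiftDer, MvPolynomial.mkDerivation_X]

/-- Inserting a `1` at position `j`. -/
lemma step1 (k m : ℕ) (j : Fin (m + 1)) :
    MvPolynomial.X 1 * Lpoly k m
      = ∑ g ∈ (Aset (m + 1) (k + 1)).filter (fun g => g j = 1), wgt g := by
  classical
  rw [Lpoly_eq, Finset.mul_sum]
  refine Finset.sum_nbij' (fun f => j.insertNth 1 f) (fun g => fun i => g (j.succAbove i))
    ?_ ?_ ?_ ?_ ?_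
  · intro f hf
    beta_reduce
    rw [mem_Aset] at hf
    rw [Finset.mem_filter, mem_Aset]
    refine ⟨⟨?_, ?_⟩, ?_⟩
    · rw [Fin.sum_univ_succAbove _ j]
      simp [hf.1, Nat.add_comm]
    · intro i
      rcases eq_or_ne i j with rfl | hij
      · simp
      · obtain ⟨i', rfl⟩ := Fin.exists_succAbove_eq hij
        simpa using hf.2 i'
    · simp
  · intro g hg
    beta_reduce
    rw [Finset.mem_filter, mem_Aset] at hg
    rw [mem_Aset]
    refine ⟨?_, fun i => hg.1.2 _⟩
    have h' := Fin.sum_univ_succAbove g j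
    have h1 := hg.1.1
    have h2 := hg.2
    omega
  · intro f _
    beta_reduce
    funext i
    simp
  · intro g hg
    beta_reduce
    rw [Finset.mem_filter] at hg
    funext i
    rcases eq_or_ne i j with rfl | hij
    · simp only [Fin.insertNth_apply_same]
      exact hg.2.symm
    · obtain ⟨i', rfl⟩ := Fin.exists_succAbove_eq hij
      simp
  · intro f _
    beta_reduce
    have hp := Fin.prod_univ_succAbove
      (fun i => MvPolynomial.C ((Nat.factorial (Fin.insertNth (α := fun _ => ℕ) j 1 f i) : ℝ)⁻¹)
        * MvPolynomial.X (Fin.insertNth (α := fun _ => ℕ) j 1 f i)) j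
    rw [wgt, wgt, hp]
    simp

/-- Bumping position `j` by one. -/
lemma step2 (k m : ℕ) (j : Fin (m + 1)) :
    (∑ f ∈ Aset (m + 1) k, (∏ i ∈ Finset.univ.erase j,
        (MvPolynomial.C ((Nat.factorial (f i) : ℝ)⁻¹) * MvPolynomial.X (f i)))
          * (MvPolynomial.C ((Nat.factorial (f j) : ℝ)⁻¹) * MvPolynomial.X (f j + 1)))
      = ∑ g ∈ (Aset (m + 1) (k + 1)).filter (fun g => ¬ g j = 1),
          (g j : MvPolynomial ℕ ℝ) * wgt g := by
  classical
  refine Finset.sum_nbij' (fun f => Function.update f j (f j + 1))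
    (fun g => Function.update g j (g j - 1)) ?_ ?_ ?_ ?_ ?_
  · intro f hf
    beta_reduce
    rw [mem_Aset] at hf
    rw [Finset.mem_filter, mem_Aset]
    have hsum : ∑ i, Function.update f j (f j + 1) i = (∑ i, f i) + 1 := by
      rw [Finset.sum_update_of_mem (Finset.mem_univ j), ← Finset.erase_eq]
      have := Finset.add_sum_erase Finset.univ f (Finset.mem_univ j)
      omega
    have h1f := hf.2 j
    refine ⟨⟨?_, fun i => ?_⟩, ?_⟩
    · have := hf.1; omega
    · rcases eq_or_ne i j with rfl | hij
      · simp
      · rw [Function.update_of_ne hij]; exact hf.2 i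
    · simp only [Function.update_self]; omega
  · intro g hg
    beta_reduce
    rw [Finset.mem_filter, mem_Aset] at hg
    rw [mem_Aset]
    have h2g : 2 ≤ g j := by have := hg.1.2 j; have := hg.2; omega
    have hsum : ∑ i, Function.update g j (g j - 1) i = (∑ i, g i) - 1 := by
      rw [Finset.sum_update_of_mem (Finset.mem_univ j), ← Finset.erase_eq]
      have := Finset.add_sum_erase Finset.univ g (Finset.mem_univ j)
      omega
    refine ⟨?_, fun i => ?_⟩
    · have := hg.1.1; omega
    · rcases eq_or_ne i j with rfl | hij
      · simp only [Function.update_self]; omega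
      · rw [Function.update_of_ne hij]; exact hg.1.2 i
  · intro f _
    beta_reduce
    funext i
    rcases eq_or_ne i j with rfl | hij
    · simp
    · simp [Function.update_of_ne hij]
  · intro g hg
    beta_reduce
    rw [Finset.mem_filter, mem_Aset] at hg
    have h2g : 2 ≤ g j := by have := hg.1.2 j; have := hg.2; omega
    funext i
    rcases eq_or_ne i j with rfl | hij
    · simp only [Function.update_idem, Function.update_self]
      omega
    · simp [Function.update_of_ne hij]
  · intro f hf
    beta_reduce
    rw [mem_Aset] at hf
    have hkey : MvPolynomial.C (σ := ℕ) ((Nat.factorial (f j) : ℝ)⁻¹)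
        = ((f j : MvPolynomial ℕ ℝ) + 1)
          * MvPolynomial.C ((Nat.factorial (f j + 1) : ℝ)⁻¹) := by
      have hfac : ((Nat.factorial (f j) : ℝ))⁻¹
          = ((f j : ℝ) + 1) * ((Nat.factorial (f j + 1) : ℝ))⁻¹ := by
        rw [Nat.factorial_succ]
        push_cast
        rw [mul_inv, mul_inv_cancel_left₀ (by positivity)]
      rw [hfac, map_mul]
      simp
    have hupd : ∀ i ∈ Finset.univ.erase j, Function.update f j (f j + 1) i = f i := by
      intro i hi
      rw [Function.update_of_ne (Finset.ne_of_mem_erase hi)]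
    have hprod : wgt (Function.update f j (f j + 1))
        = (MvPolynomial.C ((Nat.factorial (f j + 1) : ℝ)⁻¹) * MvPolynomial.X (f j + 1))
          * ∏ i ∈ Finset.univ.erase j,
              (MvPolynomial.C ((Nat.factorial (f i) : ℝ)⁻¹) * MvPolynomial.X (f i)) := by
      rw [wgt, ← Finset.mul_prod_erase Finset.univ _ (Finset.mem_univ j)]
      congr 1
      · simp
      · exact Finset.prod_congr rfl fun i hi => by rw [hupd i hi]
    rw [Function.update_self, hprod, hkey]
    push_cast
    ring

end LpolyAux

open LpolyAux in
/-- The recursion `n u⁽¹⁾ L^{(k)}_{(n−1)} + S(L^{(k)}_{(n)}) = (k+1) L^{(k+1)}_{(n)}`. -/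
theorem Lpoly_recursion (k n : ℕ) (hn : 1 ≤ n) :
    (n : MvPolynomial ℕ ℝ) * MvPolynomial.X 1 * Lpoly k (n - 1)
        + shiftDer (Lpoly k n)
      = ((k : MvPolynomial ℕ ℝ) + 1) * Lpoly (k + 1) n := by
  classical
  obtain ⟨m, rfl⟩ : ∃ m, n = m + 1 := ⟨n - 1, (Nat.succ_pred_eq_of_pos hn).symm⟩
  simp only [Nat.add_sub_cancel]
  -- rewrite the right-hand side
  have h3 : ((k : MvPolynomial ℕ ℝ) + 1) * Lpoly (k + 1) (m + 1)
      = ∑ j : Fin (m + 1), ∑ g ∈ Aset (m + 1) (k + 1), (g j : MvPolynomial ℕ ℝ) * wgt g := by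
    rw [Lpoly_eq, Finset.mul_sum, Finset.sum_comm]
    refine Finset.sum_congr rfl fun g hg => ?_
    rw [mem_Aset] at hg
    rw [← Finset.sum_mul]
    congr 1
    have hcast : ((k : MvPolynomial ℕ ℝ) + 1) = (((k + 1 : ℕ)) : MvPolynomial ℕ ℝ) := by
      push_cast; ring
    rw [hcast, ← hg.1]
    push_cast
    rfl
  -- rewrite the derivation term
  have h4 : shiftDer (Lpoly k (m + 1))
      = ∑ j : Fin (m + 1), ∑ f ∈ Aset (m + 1) k, (∏ i ∈ Finset.univ.erase j,
          (MvPolynomial.C ((Nat.factorial (f i) : ℝ)⁻¹) * MvPolynomial.X (f i)))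
            * (MvPolynomial.C ((Nat.factorial (f j) : ℝ)⁻¹)
              * MvPolynomial.X (f j + 1)) := by
    rw [Lpoly_eq, map_sum, Finset.sum_comm]
    refine Finset.sum_congr rfl fun f _ => ?_
    rw [wgt, deriv_prod]
    refine Finset.sum_congr rfl fun j _ => ?_
    rw [shiftDer_C_mul_X]
  rw [h3, h4]
  have hcount : ((m + 1 : ℕ) : MvPolynomial ℕ ℝ) * MvPolynomial.X 1 * Lpoly k m
      = ∑ _j : Fin (m + 1), MvPolynomial.X 1 * Lpoly k m := by
    rw [Finset.sum_const, Finset.card_univ, Fintype.card_fin, nsmul_eq_mul]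
    push_cast
    ring
  rw [hcount, ← Finset.sum_add_distrib]
  refine Finset.sum_congr rfl fun j _ => ?_
  rw [step1 k m j, step2 k m j,
    ← Finset.sum_filter_add_sum_filter_not (Aset (m + 1) (k + 1)) (fun g => g j = 1)]
  congr 1
  refine Finset.sum_congr rfl fun g hg => ?_
  rw [Finset.mem_filter] at hg
  rw [hg.2]
  push_cast
  ring
end

section
/- Let ξ : ℝ² → ℝ be C^p, let u⁽⁰⁾, …, u⁽ᵖ⁾ ∈ ℝ, and define the jet total derivative D = ∂_x + ∑_{J=0}^{p-1} u⁽ᴶ⁺¹⁾ ∂_{u⁽ᴶ⁾}. Then for every l ≤ p, ( ∑_{J} u⁽ᴶ⁺¹⁾ ∂_{u⁽ᴶ⁾} )^l ξ(x, u⁽⁰⁾) = ∑_{n=0}^{l} (l!/n!) L^{(l)}_{(n)} (∂_u)^n ξ(x, u⁽⁰⁾), where L^{(l)}_{(n)} = ∑_{l₁+⋯+l_n=l, lᵢ≥1} ∏ u⁽ˡⁱ⁾/lᵢ! and L^{(l)}_{(0)} = δ_{l,0}. -/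
open Finset

/-- Jet variables: `none` is `x`, `some J` is `u⁽ᴶ⁾`. The shift derivation
`∑_J u⁽ᴶ⁺¹⁾ ∂_{u⁽ᴶ⁾}`. -/
noncomputable def shiftS' : Derivation ℝ (MvPolynomial (Option ℕ) ℝ) (MvPolynomial (Option ℕ) ℝ) :=
  MvPolynomial.mkDerivation ℝ (fun v =>
    match v with
    | none => 0
    | some J => MvPolynomial.X (some (J + 1)))

/-- The partial derivative `∂_u = ∂_{u⁽⁰⁾}`. -/
noncomputable def partialU : Derivation ℝ (MvPolynomial (Option ℕ) ℝ) (MvPolynomial (Option ℕ) ℝ) :=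
  MvPolynomial.mkDerivation ℝ (fun v =>
    match v with
    | some 0 => 1
    | _ => 0)

/-- `L^{(l)}_{(n)} = ∑_{l₁+⋯+l_n=l, lᵢ≥1} ∏ᵢ u⁽ˡⁱ⁾/lᵢ!` as a polynomial in the jet
variables (with `L^{(l)}_{(0)} = δ_{l,0}`). -/
noncomputable def LpolyJet (l n : ℕ) : MvPolynomial (Option ℕ) ℝ :=
  ∑ f ∈ (Finset.Nat.antidiagonalTuple n l).filter (fun f => ∀ i, 1 ≤ f i),
    ∏ i, (MvPolynomial.C ((Nat.factorial (f i) : ℝ)⁻¹) * MvPolynomial.X (some (f i)))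

/-!
Put `U(t) = ∑_{k ≥ 1} u⁽ᵏ⁾ tᵏ / k!` (`jetSeries`), so that `L^{(l)}_{(n)}` is the coefficient
of `tˡ` in `Uⁿ`. Applied coefficientwise, the shift derivation `S` sends `u⁽ᵏ⁾ tᵏ / k!` to
`u⁽ᵏ⁺¹⁾ tᵏ / k!`, i.e. `S U = U' - u⁽¹⁾`; the Leibniz rule for powers then gives
`S (Uⁿ) = (Uⁿ)' - n u⁽¹⁾ Uⁿ⁻¹`, which on coefficients is the recursion
`S L^{(l)}_{(n)} = (l+1) L^{(l+1)}_{(n)} - n u⁽¹⁾ L^{(l)}_{(n-1)}`.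
On functions of `(x, u⁽⁰⁾)` the shift derivation is `u⁽¹⁾ ∂_u`, and `∂_u` preserves them, so the
identity follows by induction on `l`, the recursion making the sum telescope.
-/

open MvPolynomial
open scoped PowerSeries Nat

namespace Derivation

variable {R A : Type*} [CommSemiring R] [CommSemiring A] [Algebra R A]

noncomputable def mapPowerSeries (D : Derivation R A A) : Derivation R A⟦X⟧ A⟦X⟧ where
  toFun f := PowerSeries.mk fun n => D (PowerSeries.coeff n f)
  map_add' f g := by ext n; simp
  map_smul' r f := by ext n; simp
  map_one_eq_zero' := by ext n; simp [PowerSeries.coeff_one, apply_ite D]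
  leibniz' f g := by
    ext n
    rw [smul_eq_mul, smul_eq_mul, mul_comm g]
    simp [PowerSeries.coeff_mul, Finset.sum_add_distrib, mul_comm (PowerSeries.coeff _ g)]

@[simp]
lemma coeff_mapPowerSeries (D : Derivation R A A) (f : A⟦X⟧) (n : ℕ) :
    PowerSeries.coeff n (D.mapPowerSeries f) = D (PowerSeries.coeff n f) := by
  simp [mapPowerSeries]

lemma map_mem_adjoin (D : Derivation R A A) {s : Set A} (hs : ∀ x ∈ s, D x ∈ Algebra.adjoin R s)
    {a : A} (ha : a ∈ Algebra.adjoin R s) : D a ∈ Algebra.adjoin R s := by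
  induction ha using Algebra.adjoin_induction with
  | mem x hx => exact hs x hx
  | algebraMap r => simp
  | add x y _ _ hx hy => simpa using add_mem hx hy
  | mul x y hx' hy' hx hy =>
    simpa using add_mem (mul_mem hx' hy) (mul_mem hy' hx)

end Derivation

lemma Finset.sum_finsuppAntidiag_eq_sum_piAntidiag {ι M : Type*} [DecidableEq ι] [AddCommMonoid M]
    (s : Finset ι) (n : ℕ) (F : (ι → ℕ) → M) :
    ∑ f ∈ finsuppAntidiag s n, F f = ∑ f ∈ piAntidiag s n, F f := by
  rw [finsuppAntidiag, sum_map, ← sum_attach (piAntidiag s n)]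
  rfl

noncomputable def jetSeries : (MvPolynomial (Option ℕ) ℝ)⟦X⟧ :=
  PowerSeries.mk fun k => if k = 0 then 0 else C ((k ! : ℝ)⁻¹) * X (some k)

lemma LpolyJet_eq_coeff_jetSeries_pow (l n : ℕ) :
    LpolyJet l n = PowerSeries.coeff l (jetSeries ^ n) := by
  classical
  have hprod (f : Fin n → ℕ) : ∏ i, PowerSeries.coeff (f i) jetSeries =
      if ∀ i, 1 ≤ f i then ∏ i, C (((f i)! : ℝ)⁻¹) * X (some (f i)) else 0 := by
    split_ifs with hf
    · exact prod_congr rfl fun i _ => by simp [jetSeries, Nat.one_le_iff_ne_zero.mp (hf i)]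
    · push Not at hf
      obtain ⟨i, hi⟩ := hf
      exact prod_eq_zero (mem_univ i) (by simp [jetSeries, Nat.lt_one_iff.mp hi])
  rw [← Fin.prod_const, PowerSeries.coeff_prod,
    sum_finsuppAntidiag_eq_sum_piAntidiag _ _ fun f => ∏ i, PowerSeries.coeff (f i) jetSeries,
    piAntidiag_univ_fin_eq_antidiagonalTuple, LpolyJet, sum_filter]
  simp only [hprod]

lemma LpolyJet_zero_zero : LpolyJet 0 0 = 1 := by
  simp [LpolyJet_eq_coeff_jetSeries_pow]

lemma LpolyJet_eq_zero_of_lt {l n : ℕ} (h : l < n) : LpolyJet l n = 0 := by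
  obtain ⟨V, hV⟩ : PowerSeries.X ^ n ∣ jetSeries ^ n :=
    pow_dvd_pow_of_dvd (PowerSeries.X_dvd_iff.mpr (by simp [jetSeries])) n
  rw [LpolyJet_eq_coeff_jetSeries_pow, hV, PowerSeries.coeff_X_pow_mul', if_neg (by omega)]

lemma shiftS'_X_some (J : ℕ) : shiftS' (X (some J)) = X (some (J + 1)) := by
  simp [shiftS', mkDerivation_X]

lemma mapPowerSeries_shiftS'_jetSeries :
    shiftS'.mapPowerSeries jetSeries
      = PowerSeries.derivative _ jetSeries - PowerSeries.C (X (some 1)) := by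
  refine PowerSeries.ext fun k => ?_
  simp only [Derivation.coeff_mapPowerSeries, map_sub, PowerSeries.coeff_derivative,
    PowerSeries.coeff_C, jetSeries, PowerSeries.coeff_mk]
  rcases k with _ | k
  · simp
  · simp only [Nat.add_one_ne_zero, if_false, sub_zero, Derivation.leibniz, derivation_C,
      shiftS'_X_some, smul_eq_mul, mul_zero, add_zero]
    rw [← Nat.cast_succ, ← map_natCast C, mul_right_comm, ← map_mul, Nat.factorial_succ (k + 1)]
    congr 2
    push_cast
    field_simp

lemma shiftS'_LpolyJet (l n : ℕ) :
    shiftS' (LpolyJet l n)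
      = (l + 1) • LpolyJet (l + 1) n - n • (X (some 1) * LpolyJet l (n - 1)) := by
  have h := congrArg (PowerSeries.coeff l) (shiftS'.mapPowerSeries.leibniz_pow jetSeries n)
  rw [mapPowerSeries_shiftS'_jetSeries, smul_sub, smul_sub, ← Derivation.leibniz_pow, map_sub,
    Derivation.coeff_mapPowerSeries, PowerSeries.coeff_derivative, map_nsmul, smul_eq_mul,
    PowerSeries.coeff_mul_C] at h
  simp only [LpolyJet_eq_coeff_jetSeries_pow, h, nsmul_eq_mul]
  push_cast
  ring

lemma shiftS'_pow_eq_sum_LpolyJet {a : ℕ → MvPolynomial (Option ℕ) ℝ}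
    (ha : ∀ n, shiftS' (a n) = X (some 1) * a (n + 1)) {l N : ℕ} (hlN : l < N) :
    (shiftS'.toLinearMap ^ l) (a 0)
      = ∑ n ∈ range N, ((l ! : ℝ) / n !) • (LpolyJet l n * a n) := by
  obtain ⟨M, rfl⟩ : ∃ M, N = M + 1 := ⟨N - 1, by omega⟩
  induction l generalizing M with
  | zero =>
    rw [sum_range_succ', sum_eq_zero fun m _ => by
      rw [LpolyJet_eq_zero_of_lt m.succ_pos, zero_mul, smul_zero]]
    simp [LpolyJet_zero_zero]
  | succ l ih =>
    set g : ℕ → MvPolynomial (Option ℕ) ℝ :=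
      fun n => ((l ! : ℝ) / n !) • (X (some 1) * LpolyJet l n * a (n + 1)) with hg
    set h : ℕ → MvPolynomial (Option ℕ) ℝ :=
      fun n => ((l ! * n : ℝ) / n !) • (X (some 1) * LpolyJet l (n - 1) * a n) with hh
    have hterm (n : ℕ) : shiftS' (((l ! : ℝ) / n !) • (LpolyJet l n * a n))
        = (((l + 1)! : ℝ) / n !) • (LpolyJet (l + 1) n * a n) + g n - h n := by
      rw [Derivation.map_smul, Derivation.leibniz, ha, shiftS'_LpolyJet, Nat.factorial_succ,
        Nat.cast_mul, mul_div_assoc]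
      simp only [nsmul_eq_mul]
      simp only [hg, hh, mul_div_right_comm _ (n : ℝ), smul_eq_mul, Algebra.smul_def, map_mul,
        map_natCast]
      ring
    have hh0 : h 0 = 0 := by simp [hh]
    have hhsucc (m : ℕ) : h (m + 1) = g m := by
      simp only [hh, hg, Nat.factorial_succ, add_tsub_cancel_right]
      congr 1
      push_cast
      field_simp
    have hgM : g M = 0 := by
      simp [hg, LpolyJet_eq_zero_of_lt (show l < M by omega)]
    rw [pow_succ', Module.End.mul_apply, ih M (by omega), Derivation.coeFn_coe, map_sum]
    simp only [hterm, sum_sub_distrib, sum_add_distrib]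
    rw [sum_range_succ g, hgM, sum_range_succ' h, hh0]
    simp only [hhsucc]
    abel

lemma shiftS'_eq_X_mul_partialU {η : MvPolynomial (Option ℕ) ℝ}
    (hη : η ∈ Algebra.adjoin ℝ {X none, X (some 0)}) :
    shiftS' η = X (some 1) * partialU η := by
  have hgen : Set.EqOn shiftS' ⇑((X (some 1) : MvPolynomial (Option ℕ) ℝ) • partialU)
      ({X none, X (some 0)} : Set (MvPolynomial (Option ℕ) ℝ)) := by
    rintro _ (rfl | rfl) <;> simp [shiftS', partialU, mkDerivation_X]
  rw [Derivation.eqOn_adjoin hgen hη, Derivation.smul_apply, smul_eq_mul]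

theorem shift_iterate_faa_di_bruno_general
    (ξ : MvPolynomial (Option ℕ) ℝ)
    (hξ : ξ ∈ Algebra.adjoin ℝ
      ({MvPolynomial.X none, MvPolynomial.X (some 0)} :
        Set (MvPolynomial (Option ℕ) ℝ)))
    (l : ℕ) :
    (shiftS'.toLinearMap ^ l) ξ
      = ∑ n ∈ Finset.range (l + 1),
          MvPolynomial.C ((Nat.factorial l : ℝ) / (Nat.factorial n : ℝ)) *
            (LpolyJet l n * (partialU.toLinearMap ^ n) ξ) := by
  have hmem (n : ℕ) : (partialU.toLinearMap ^ n) ξ ∈ Algebra.adjoin ℝ {X none, X (some 0)} := by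
    induction n with
    | zero => simpa using hξ
    | succ n ih =>
      rw [pow_succ', Module.End.mul_apply]
      exact partialU.map_mem_adjoin
        (by rintro _ (rfl | rfl) <;> simp [partialU, mkDerivation_X]) ih
  have hshift (n : ℕ) : shiftS' ((partialU.toLinearMap ^ n) ξ)
      = X (some 1) * (partialU.toLinearMap ^ (n + 1)) ξ := by
    rw [shiftS'_eq_X_mul_partialU (hmem n), pow_succ', Module.End.mul_apply, Derivation.coeFn_coe]
  simpa [smul_eq_C_mul] using shiftS'_pow_eq_sum_LpolyJet hshift (lt_add_one l)

/-- Faà-di-Bruno-type identity (eq:lemma2_3): for a function `ξ(x, u)` of the base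
jet variables, `(∑_J u⁽ᴶ⁺¹⁾∂_{u⁽ᴶ⁾})^l ξ = ∑_{n=0}^{l} (l!/n!) L^{(l)}_{(n)} ∂_u^n ξ`. -/
theorem shift_iterate_faa_di_bruno
    (p : ℕ) (ξ : MvPolynomial (Option ℕ) ℝ)
    (hξ : ξ ∈ Algebra.adjoin ℝ
      ({MvPolynomial.X none, MvPolynomial.X (some 0)} :
        Set (MvPolynomial (Option ℕ) ℝ)))
    (l : ℕ) (hl : l ≤ p) :
    (shiftS'.toLinearMap ^ l) ξ
      = ∑ n ∈ Finset.range (l + 1),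
          MvPolynomial.C ((Nat.factorial l : ℝ) / (Nat.factorial n : ℝ)) *
            (LpolyJet l n * (partialU.toLinearMap ^ n) ξ) :=
  shift_iterate_faa_di_bruno_general ξ hξ l
end

section
/- Let F : ℝ^N → ℝ^M be analytic in (z, ε), write F(z, ε) = F₀(z) + ε F₁(z) + o(ε), and suppose the rank of ∂F₀/∂z equals M on the zero set of F₀. Let X = X₀ + ε X₁ + o(ε) be a first-order approximate infinitesimal operator with X₀ = ξ₀ᵀ∂_z, X₁ = ξ₁ᵀ∂_z. Then the pair of exact conditions: (i) X₀F₀(z₀) = 0 and (ii) X₁F₀(z₀) + X₀F₁(z₀) + z₁·∂_z(X₀F₀(z₀)) = 0, holding for all (z₀, z₁) satisfying F₀(z₀) = 0 and F₁(z₀) + z₁·∂_zF₀(z₀) = 0, is equivalent to the approximate invariance condition X(F₀ + εF₁)|_{F=o(ε)} = o(ε) evaluated along z = z₀ + εz₁ + o(ε). -/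
open Filter

private lemma aux_key
    (N : ℕ)
    (F₀ F₁ : (Fin N → ℝ) → ℝ)
    (ξ₀ ξ₁ : (Fin N → ℝ) → (Fin N → ℝ))
    (hF₀ : ContDiff ℝ (⊤ : ℕ∞) F₀) (hF₁ : ContDiff ℝ (⊤ : ℕ∞) F₁)
    (hξ₀ : ContDiff ℝ (⊤ : ℕ∞) ξ₀) (hξ₁ : ContDiff ℝ (⊤ : ℕ∞) ξ₁)
    (z₀ z₁ : Fin N → ℝ) :
    Tendsto (fun ε : ℝ =>
            (fderiv ℝ F₀ (z₀ + ε • z₁) (ξ₀ (z₀ + ε • z₁))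
              + ε * (fderiv ℝ F₀ (z₀ + ε • z₁) (ξ₁ (z₀ + ε • z₁))
                      + fderiv ℝ F₁ (z₀ + ε • z₁) (ξ₀ (z₀ + ε • z₁)))) / ε)
          (nhdsWithin 0 {0}ᶜ) (nhds 0)
    ↔ (fderiv ℝ F₀ z₀ (ξ₀ z₀) = 0 ∧
          fderiv ℝ F₀ z₀ (ξ₁ z₀) + fderiv ℝ F₁ z₀ (ξ₀ z₀)
            + fderiv ℝ (fun z => fderiv ℝ F₀ z (ξ₀ z)) z₀ z₁ = 0) := by
  set h : (Fin N → ℝ) → ℝ := fun z => fderiv ℝ F₀ z (ξ₀ z) with hh_def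
  set B : (Fin N → ℝ) → ℝ := fun z => fderiv ℝ F₀ z (ξ₁ z) + fderiv ℝ F₁ z (ξ₀ z)
    with hB_def
  set c : ℝ → (Fin N → ℝ) := fun ε => z₀ + ε • z₁ with hc_def
  have hc0 : c 0 = z₀ := by simp [hc_def]
  have hh : ContDiff ℝ (⊤ : ℕ∞) h := (hF₀.fderiv_right (mod_cast le_top)).clm_apply hξ₀
  have hB : Continuous B := by
    exact (((hF₀.fderiv_right (mod_cast le_top)).clm_apply hξ₁).add
      ((hF₁.fderiv_right (mod_cast le_top)).clm_apply hξ₀)).continuous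
  have hc : HasDerivAt c z₁ 0 := by
    have : HasDerivAt (fun ε : ℝ => ε • z₁) ((1:ℝ) • z₁) 0 :=
      (hasDerivAt_id (0:ℝ)).smul_const z₁
    simpa [hc_def] using this.const_add z₀
  have hcont_c : Continuous c := hc_def ▸ (continuous_const.add (continuous_id.smul continuous_const))
  set D : ℝ := fderiv ℝ h z₀ z₁ with hD_def
  have hcomp : HasDerivAt (fun ε => h (c ε)) D 0 := by
    have hd : HasFDerivAt h (fderiv ℝ h z₀) (c 0) := by
      rw [hc0]; exact (hh.differentiable (by simp) z₀).hasFDerivAt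
    exact hd.comp_hasDerivAt 0 hc
  have hslope : Tendsto (fun ε : ℝ => (h (c ε) - h z₀) / ε) (nhdsWithin 0 {0}ᶜ) (nhds D) := by
    have := hasDerivAt_iff_tendsto_slope.mp hcomp
    refine this.congr (fun ε => ?_)
    simp [slope_def_field, hc0, div_eq_inv_mul]
  have hBc : Tendsto (fun ε => B (c ε)) (nhdsWithin 0 {0}ᶜ) (nhds (B z₀)) := by
    have : Tendsto (fun ε => B (c ε)) (nhds 0) (nhds (B (c 0))) :=
      ((hB.comp hcont_c).continuousAt).tendsto
    rw [hc0] at this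
    exact this.mono_left nhdsWithin_le_nhds
  constructor
  · intro HT
    -- first: h z₀ = 0
    have hmul : Tendsto (fun ε : ℝ => ε * ((h (c ε) + ε * B (c ε)) / ε))
        (nhdsWithin 0 {0}ᶜ) (nhds 0) := by
      simpa using (tendsto_id.mono_left nhdsWithin_le_nhds).mul HT
    have hg0 : Tendsto (fun ε : ℝ => h (c ε) + ε * B (c ε)) (nhdsWithin 0 {0}ᶜ) (nhds 0) := by
      refine hmul.congr' ?_
      filter_upwards [self_mem_nhdsWithin] with ε hε
      rw [mul_comm]; exact div_mul_cancel₀ _ hε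
    have hgc : Tendsto (fun ε : ℝ => h (c ε) + ε * B (c ε)) (nhdsWithin 0 {0}ᶜ)
        (nhds (h z₀)) := by
      have : Tendsto (fun ε : ℝ => h (c ε) + ε * B (c ε)) (nhds 0)
          (nhds (h (c 0) + 0 * B (c 0))) :=
        (((hh.continuous.comp hcont_c).continuousAt).tendsto.add
          ((continuousAt_id.mul ((hB.comp hcont_c).continuousAt)).tendsto))
      rw [hc0] at this
      simpa using this.mono_left nhdsWithin_le_nhds
    have hz : h z₀ = 0 := tendsto_nhds_unique hgc hg0
    refine ⟨hz, ?_⟩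
    have hlim : Tendsto (fun ε : ℝ => (h (c ε) + ε * B (c ε)) / ε)
        (nhdsWithin 0 {0}ᶜ) (nhds (D + B z₀)) := by
      refine (hslope.add hBc).congr' ?_
      filter_upwards [self_mem_nhdsWithin] with ε hε
      have hε' : (ε : ℝ) ≠ 0 := hε
      field_simp [hz]
      rw [hz]; ring
    have := tendsto_nhds_unique hlim HT
    rw [hB_def] at this
    dsimp only at this
    linarith [this]
  · rintro ⟨hz, heq⟩
    have hz' : h z₀ = 0 := hz
    have hlim : Tendsto (fun ε : ℝ => (h (c ε) + ε * B (c ε)) / ε)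
        (nhdsWithin 0 {0}ᶜ) (nhds (D + B z₀)) := by
      refine (hslope.add hBc).congr' ?_
      filter_upwards [self_mem_nhdsWithin] with ε hε
      have hε' : (ε : ℝ) ≠ 0 := hε
      field_simp [hz']
      rw [hz']; ring
    have hDB : D + B z₀ = 0 := by
      rw [hB_def]; dsimp only; linarith [heq]
    rw [hDB] at hlim
    exact hlim

/-- Splitting of the first-order approximate invariance criterion into exact
zeroth- and first-order determining equations (M = 1 scalar case).
Here `X₀G z = ∇G(z)·ξ₀(z)` and `X₁G z = ∇G(z)·ξ₁(z)`. -/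
theorem approximate_invariance_splitting
    (N : ℕ)
    (F₀ F₁ : (Fin N → ℝ) → ℝ)
    (ξ₀ ξ₁ : (Fin N → ℝ) → (Fin N → ℝ))
    (hF₀ : ContDiff ℝ (⊤ : ℕ∞) F₀) (hF₁ : ContDiff ℝ (⊤ : ℕ∞) F₁)
    (hξ₀ : ContDiff ℝ (⊤ : ℕ∞) ξ₀) (hξ₁ : ContDiff ℝ (⊤ : ℕ∞) ξ₁)
    (hrank : ∀ z, F₀ z = 0 → fderiv ℝ F₀ z ≠ 0) :
    (∀ z₀ z₁ : Fin N → ℝ, F₀ z₀ = 0 → F₁ z₀ + fderiv ℝ F₀ z₀ z₁ = 0 →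
        (fderiv ℝ F₀ z₀ (ξ₀ z₀) = 0 ∧
          fderiv ℝ F₀ z₀ (ξ₁ z₀) + fderiv ℝ F₁ z₀ (ξ₀ z₀)
            + fderiv ℝ (fun z => fderiv ℝ F₀ z (ξ₀ z)) z₀ z₁ = 0))
    ↔
    (∀ z₀ z₁ : Fin N → ℝ, F₀ z₀ = 0 → F₁ z₀ + fderiv ℝ F₀ z₀ z₁ = 0 →
        Tendsto (fun ε : ℝ =>
            (fderiv ℝ F₀ (z₀ + ε • z₁) (ξ₀ (z₀ + ε • z₁))
              + ε * (fderiv ℝ F₀ (z₀ + ε • z₁) (ξ₁ (z₀ + ε • z₁))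
                      + fderiv ℝ F₁ (z₀ + ε • z₁) (ξ₀ (z₀ + ε • z₁)))) / ε)
          (nhdsWithin 0 {0}ᶜ) (nhds 0)) := by
  constructor
  · intro H z₀ z₁ h0 h1
    exact (aux_key N F₀ F₁ ξ₀ ξ₁ hF₀ hF₁ hξ₀ hξ₁ z₀ z₁).mpr (H z₀ z₁ h0 h1)
  · intro H z₀ z₁ h0 h1
    exact (aux_key N F₀ F₁ ξ₀ ξ₁ hF₀ hF₁ hξ₀ hξ₁ z₀ z₁).mp (H z₀ z₁ h0 h1)
end

section
/- Suppose for a scalar equation (M = 1) that X₀F₀ = λ F₀ identically for a smooth function λ : ℝ^N → ℝ. Then the first-order determining condition X₁F₀(z₀) + X₀F₁(z₀) + z₁·∂_z(X₀F₀)(z₀) = 0, required for all (z₀, z₁) with F₀(z₀) = 0 and F₁(z₀) + z₁·∂_zF₀(z₀) = 0, is equivalent to the locality-reduced condition: X₁F₀(z) + X₀F₁(z) = λ(z) F₁(z) for all z with F₀(z) = 0. -/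
/-- Elimination of the auxiliary variable `z₁` from the first-order determining
equations: if `X₀F₀ = λF₀` identically, then the determining condition involving
`z₁` is equivalent to `X₁F₀ + X₀F₁ = λF₁` on the set `F₀ = 0`.
Here `X₀G z = ∇G(z)·ξ₀(z)` and `X₁G z = ∇G(z)·ξ₁(z)`. -/
theorem elimination_of_z1
    (N : ℕ)
    (F₀ F₁ lam : (Fin N → ℝ) → ℝ)
    (ξ₀ ξ₁ : (Fin N → ℝ) → (Fin N → ℝ))
    (hF₀ : ContDiff ℝ (⊤ : ℕ∞) F₀) (hF₁ : ContDiff ℝ (⊤ : ℕ∞) F₁) (hlam : ContDiff ℝ (⊤ : ℕ∞) lam)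
    (hξ₀ : ContDiff ℝ (⊤ : ℕ∞) ξ₀) (hξ₁ : ContDiff ℝ (⊤ : ℕ∞) ξ₁)
    (hrank : ∀ z, F₀ z = 0 → fderiv ℝ F₀ z ≠ 0)
    (hexact : ∀ z, fderiv ℝ F₀ z (ξ₀ z) = lam z * F₀ z) :
    (∀ z₀ z₁ : Fin N → ℝ, F₀ z₀ = 0 → F₁ z₀ + fderiv ℝ F₀ z₀ z₁ = 0 →
        fderiv ℝ F₀ z₀ (ξ₁ z₀) + fderiv ℝ F₁ z₀ (ξ₀ z₀)
          + fderiv ℝ (fun z => fderiv ℝ F₀ z (ξ₀ z)) z₀ z₁ = 0)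
    ↔
    (∀ z : Fin N → ℝ, F₀ z = 0 →
        fderiv ℝ F₀ z (ξ₁ z) + fderiv ℝ F₁ z (ξ₀ z) = lam z * F₁ z) := by
  have hfun : (fun z => fderiv ℝ F₀ z (ξ₀ z)) = fun z => lam z * F₀ z := by
    funext z; exact hexact z
  have key : ∀ z₀ z₁ : Fin N → ℝ, F₀ z₀ = 0 →
      fderiv ℝ (fun z => fderiv ℝ F₀ z (ξ₀ z)) z₀ z₁
        = lam z₀ * fderiv ℝ F₀ z₀ z₁ := by
    intro z₀ z₁ h0
    rw [hfun, fderiv_fun_mul (hlam.differentiable (by simp) z₀) (hF₀.differentiable (by simp) z₀)]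
    simp [h0]
  constructor
  · intro H z h0
    -- pick z₁ with fderiv F₀ z z₁ = -F₁ z
    have hne := hrank z h0
    obtain ⟨v, hv⟩ : ∃ v, fderiv ℝ F₀ z v ≠ 0 := by
      by_contra hc
      push_neg at hc
      exact hne (ContinuousLinearMap.ext fun v => hc v)
    set z₁ := (-F₁ z / fderiv ℝ F₀ z v) • v with hz₁
    have hval : fderiv ℝ F₀ z z₁ = -F₁ z := by
      rw [hz₁, map_smul, smul_eq_mul]
      field_simp
    have hcon : F₁ z + fderiv ℝ F₀ z z₁ = 0 := by rw [hval]; ring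
    have := H z z₁ h0 hcon
    rw [key z z₁ h0, hval] at this
    linarith
  · intro H z₀ z₁ h0 hcon
    have hval : fderiv ℝ F₀ z₀ z₁ = -F₁ z₀ := by linarith
    rw [key z₀ z₁ h0, hval]
    have := H z₀ h0
    linarith
end

section
/- Let L*(x, y) = −((x+1)²/x)·y²(1 + xy) − y/x² + C(x)·y(1 + xy) for an arbitrary differentiable C : ℝ → ℝ and x ≠ 0. Then L* solves the linear first-order PDE (1 + xy)² · ∂_y( L*/(y(1 + xy)) ) + (1 + (x+1)y)(2 + x + xy(x+1)) = 0 (for y with y(1 + xy) ≠ 0). -/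
/-!
Near `y` the quotient `L*/(y(1+xy))` equals `-((x+1)²/x) t - 1/(x²(1+xt)) + C(x)`,
whose derivative at `y` is `-(x+1)²/x + 1/(x(1+xy)²)`. Multiplied by `(1+xy)²` this is
`(1 - (x+1)²(1+xy)²)/x`, and factoring the difference of squares gives
`1 - (x+1)(1+xy) = -x(1+(x+1)y)` and `1 + (x+1)(1+xy) = 2+x+xy(x+1)`.
-/

open Filter Topology

lemma correction_div_eq (a c : ℝ) {x t u : ℝ} (hx : x ≠ 0) (ht : t ≠ 0) (hu : u ≠ 0) :
    (a * t ^ 2 * u - t / x ^ 2 + c * t * u) / (t * u) = a * t - (x ^ 2 * u)⁻¹ + c := by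
  field_simp

lemma correction_div_eventuallyEq (a c : ℝ) {x : ℝ} (hx : x ≠ 0) {y : ℝ}
    (hy : y * (1 + x * y) ≠ 0) :
    (fun t : ℝ => (a * t ^ 2 * (1 + x * t) - t / x ^ 2 + c * t * (1 + x * t))
        / (t * (1 + x * t)))
      =ᶠ[𝓝 y] fun t => a * t - (x ^ 2 * (1 + x * t))⁻¹ + c := by
  have hne : ∀ᶠ t in 𝓝 y, t * (1 + x * t) ≠ 0 :=
    (by fun_prop : Continuous fun t : ℝ => t * (1 + x * t)).continuousAt.eventually_ne hy
  filter_upwards [hne] with t ht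
  exact correction_div_eq a c hx (left_ne_zero_of_mul ht) (right_ne_zero_of_mul ht)

lemma hasDerivAt_inv_sq_mul_one_add_mul {x : ℝ} (hx : x ≠ 0) {y : ℝ} (hy : 1 + x * y ≠ 0) :
    HasDerivAt (fun t : ℝ => (x ^ 2 * (1 + x * t))⁻¹) (-(1 / (x * (1 + x * y) ^ 2))) y := by
  have hlin : HasDerivAt (fun t : ℝ => x ^ 2 * (1 + x * t)) (x ^ 2 * x) y := by
    simpa using (((hasDerivAt_id y).const_mul x).const_add 1).const_mul (x ^ 2)
  refine (hlin.inv (mul_ne_zero (pow_ne_zero 2 hx) hy)).congr_deriv ?_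
  field_simp

theorem correction_term_solves_pde_general
    (C : ℝ → ℝ)
    (x : ℝ) (hx : x ≠ 0) (y : ℝ) (hy : y * (1 + x * y) ≠ 0) :
    ∃ d : ℝ,
      HasDerivAt
        (fun t : ℝ =>
          (-( (x + 1) ^ 2 / x) * t ^ 2 * (1 + x * t) - t / x ^ 2
              + C x * t * (1 + x * t))
            / (t * (1 + x * t))) d y ∧
      (1 + x * y) ^ 2 * d + (1 + (x + 1) * y) * (2 + x + x * y * (x + 1)) = 0 := by
  have hy₁ : 1 + x * y ≠ 0 := right_ne_zero_of_mul hy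
  have hreduced :
      HasDerivAt (fun t : ℝ => -((x + 1) ^ 2 / x) * t - (x ^ 2 * (1 + x * t))⁻¹ + C x)
        (-((x + 1) ^ 2 / x) + 1 / (x * (1 + x * y) ^ 2)) y := by
    simpa using (((hasDerivAt_id y).const_mul (-((x + 1) ^ 2 / x))).sub
      (hasDerivAt_inv_sq_mul_one_add_mul hx hy₁)).add_const (C x)
  refine ⟨_, hreduced.congr_of_eventuallyEq (correction_div_eventuallyEq _ _ hx hy), ?_⟩
  field_simp
  ring

/-- The correction term `L*(x,y) = −((x+1)²/x)y²(1+xy) − y/x² + C(x)y(1+xy)` solves the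
linear first-order PDE `(1+xy)² ∂_y(L*/(y(1+xy))) + (1+(x+1)y)(2+x+xy(x+1)) = 0`
for any differentiable `C : ℝ → ℝ`, wherever `x ≠ 0` and `y(1+xy) ≠ 0`. -/
theorem correction_term_solves_pde
    (C : ℝ → ℝ) (hC : Differentiable ℝ C)
    (x : ℝ) (hx : x ≠ 0) (y : ℝ) (hy : y * (1 + x * y) ≠ 0) :
    ∃ d : ℝ,
      HasDerivAt
        (fun t : ℝ =>
          (-( (x + 1) ^ 2 / x) * t ^ 2 * (1 + x * t) - t / x ^ 2
              + C x * t * (1 + x * t))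
            / (t * (1 + x * t))) d y ∧
      (1 + x * y) ^ 2 * d + (1 + (x + 1) * y) * (2 + x + x * y * (x + 1)) = 0 :=
  correction_term_solves_pde_general C x hx y hy
end

section
/- Under the prolongation rules σₖ,α = ∑_{l=1}^{k+1} (h_α^l / l!) Dˡ ξ_{k+1−l}(x_α, u_α) for the step-size components, the approximate invariance of the step-size equations x_{α+1} − x_α − εh_α = o(ε^r) under the operator X = ∑_{k=0}^r εᵏ Xₖ (with Xₖ acting on x_α by ξₖ(x_α, u_α) and on h_α by σₖ,α) is equivalent to the coefficient identities: for each 1 ≤ i ≤ r, ∑_{l=1}^{i} (h_α^l / l!) Dˡ ξ_{i−l}(x_α, u_α) − σ_{i−1,α} = 0, where the differences ξₖ(x_{α+1}, u_{α+1}) − ξₖ(x_α, u_α) are expanded via ξₖ(x_{α+1}, u_{α+1}) − ξₖ(x_α, u_α) = ∑_{m=1}^{r} ((εh_α)^m / m!) Dᵐ ξₖ(x_α, u_α) + o(ε^r). -/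
/-!
After the Taylor expansion, the invariance defect of the step-size equation is a polynomial
in `ε`: its constant term vanishes and, for `1 ≤ i ≤ r`, its coefficient of `εⁱ` is
`∑_{l=1}^i (hˡ/l!) Dˡξ_{i−l} − σ_{i−1}`. A polynomial is `o(εʳ)` at `0` exactly when its
coefficients of degree `≤ r` vanish: once `Xⁱ` divides it, `p(ε)/εⁱ` tends to the coefficient of
`Xⁱ`, while `o(εʳ)` forces this quotient to tend to `0` for `i ≤ r`.
-/

open Filter Finset Polynomial Topology

section PolynomialNearZero

variable {𝕜 : Type*} [NontriviallyNormedField 𝕜]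

theorem Polynomial.tendsto_eval_div_pow_coeff_of_X_pow_dvd {p : 𝕜[X]} {n : ℕ} (hp : X ^ n ∣ p) :
    Tendsto (fun ε => p.eval ε / ε ^ n) (𝓝[≠] 0) (𝓝 (p.coeff n)) := by
  obtain ⟨q, rfl⟩ := hp
  have hcoeff : (X ^ n * q).coeff n = q.eval 0 := by
    simpa [coeff_zero_eq_eval_zero] using coeff_X_pow_mul q n 0
  rw [hcoeff]
  refine (q.continuous.tendsto 0).mono_left nhdsWithin_le_nhds |>.congr' ?_
  filter_upwards [eventually_mem_nhdsWithin] with ε (hε : ε ≠ 0)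
  rw [eval_mul, eval_pow, eval_X, mul_div_cancel_left₀ _ (pow_ne_zero n hε)]

theorem Polynomial.tendsto_eval_div_pow_nhdsNE_zero_iff (p : 𝕜[X]) (r : ℕ) :
    Tendsto (fun ε => p.eval ε / ε ^ r) (𝓝[≠] 0) (𝓝 0) ↔ ∀ i ≤ r, p.coeff i = 0 := by
  constructor
  · intro hp i
    induction i using Nat.strong_induction_on with
    | _ i ih =>
      intro hir
      have hdvd : X ^ i ∣ p := X_pow_dvd_iff.2 fun j hj => ih j hj (hj.le.trans hir)
      have hlim : Tendsto (fun ε => ε ^ (r - i) * (p.eval ε / ε ^ r)) (𝓝[≠] 0) (𝓝 0) := by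
        simpa using (((continuous_pow (r - i)).tendsto 0).mono_left nhdsWithin_le_nhds).mul hp
      refine tendsto_nhds_unique (tendsto_eval_div_pow_coeff_of_X_pow_dvd hdvd) (hlim.congr' ?_)
      filter_upwards [eventually_mem_nhdsWithin] with ε (hε : ε ≠ 0)
      rw [← Nat.sub_add_cancel hir, pow_add, Nat.add_sub_cancel]
      field_simp
  · intro hp
    have hdvd : X ^ (r + 1) ∣ p := X_pow_dvd_iff.2 fun j hj => hp j (Nat.lt_succ_iff.1 hj)
    have hlim := (tendsto_id.mono_left nhdsWithin_le_nhds).mul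
      (tendsto_eval_div_pow_coeff_of_X_pow_dvd hdvd)
    rw [zero_mul] at hlim
    refine hlim.congr' ?_
    filter_upwards [eventually_mem_nhdsWithin] with ε (hε : ε ≠ 0)
    rw [pow_succ, id, ← div_div, mul_div_cancel₀ _ hε]

end PolynomialNearZero

theorem Polynomial.coeff_sum_range_sum_Icc_C_mul_X_pow {R : Type*} [Semiring R]
    (c : ℕ → ℕ → R) {r i : ℕ} (hi : i ≤ r) :
    (∑ k ∈ range (r + 1), ∑ m ∈ Icc 1 r, C (c k m) * X ^ (k + m)).coeff i
      = ∑ m ∈ Icc 1 i, c (i - m) m := by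
  have hfiber : ∀ m ∈ Icc 1 r,
      ∑ k ∈ range (r + 1), (if i = k + m then c k m else 0) = if m ≤ i then c (i - m) m else 0 := by
    intro m _
    split_ifs with hm
    · rw [sum_eq_single_of_mem (i - m) (mem_range.2 (by omega)) fun k _ hk => if_neg (by omega),
        if_pos (by omega)]
    · exact sum_eq_zero fun k _ => if_neg (by omega)
  simp only [finsetSum_coeff, coeff_C_mul_X_pow]
  rw [sum_comm, sum_congr rfl hfiber, ← sum_filter]
  congr 1
  ext m
  simp only [mem_filter, mem_Icc]
  omega

theorem Polynomial.coeff_sum_Icc_C_mul_X_pow {R : Type*} [Semiring R] (a : ℕ → R) (r i : ℕ) :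
    (∑ k ∈ Icc 1 r, C (a k) * X ^ k).coeff i = if i ∈ Icc 1 r then a i else 0 := by
  simp only [finsetSum_coeff, coeff_C_mul_X_pow, sum_ite_eq]

noncomputable def stepsizeDefect (r : ℕ) (h : ℝ) (d : ℕ → ℕ → ℝ) (σ : ℕ → ℝ) : ℝ[X] :=
  ∑ k ∈ range (r + 1), ∑ m ∈ Icc 1 r, C (h ^ m / m.factorial * d k m) * X ^ (k + m)
    - ∑ k ∈ Icc 1 r, C (σ (k - 1)) * X ^ k

theorem eval_stepsizeDefect (r : ℕ) (h : ℝ) (d : ℕ → ℕ → ℝ) (σ : ℕ → ℝ) (ε : ℝ) :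
    (stepsizeDefect r h d σ).eval ε
      = (∑ k ∈ range (r + 1), ε ^ k *
            (∑ m ∈ Icc 1 r, (ε * h) ^ m / (m.factorial : ℝ) * d k m))
          - ∑ k ∈ Icc 1 r, ε ^ k * σ (k - 1) := by
  simp only [stepsizeDefect, eval_sub, eval_finsetSum, eval_mul, eval_C, eval_pow, eval_X, mul_sum]
  congr 1
  · refine sum_congr rfl fun k _ => sum_congr rfl fun m _ => ?_
    ring
  · exact sum_congr rfl fun k _ => mul_comm _ _

theorem coeff_stepsizeDefect {r i : ℕ} (hi : i ≤ r) (h : ℝ) (d : ℕ → ℕ → ℝ) (σ : ℕ → ℝ) :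
    (stepsizeDefect r h d σ).coeff i
      = ∑ l ∈ Icc 1 i, h ^ l / (l.factorial : ℝ) * d (i - l) l
          - if i ∈ Icc 1 r then σ (i - 1) else 0 := by
  rw [stepsizeDefect, coeff_sub, coeff_sum_range_sum_Icc_C_mul_X_pow _ hi,
    coeff_sum_Icc_C_mul_X_pow]

theorem stepsize_prolongation_characterization_general
    (r : ℕ) (h : ℝ) (d : ℕ → ℕ → ℝ) (σ : ℕ → ℝ) :
    Tendsto (fun ε : ℝ =>
        ((∑ k ∈ Finset.range (r + 1), ε ^ k *
            (∑ m ∈ Finset.Icc 1 r, (ε * h) ^ m / (Nat.factorial m : ℝ) * d k m))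
          - ∑ k ∈ Finset.Icc 1 r, ε ^ k * σ (k - 1)) / ε ^ r)
      (nhdsWithin 0 {0}ᶜ) (nhds 0)
    ↔
    (∀ i ∈ Finset.Icc 1 r,
      σ (i - 1) = ∑ l ∈ Finset.Icc 1 i, h ^ l / (Nat.factorial l : ℝ) * d (i - l) l) := by
  simp_rw [← eval_stepsizeDefect, tendsto_eval_div_pow_nhdsNE_zero_iff]
  constructor
  · intro hcoeff i hi
    have hi_coeff := hcoeff i (mem_Icc.1 hi).2
    rw [coeff_stepsizeDefect (mem_Icc.1 hi).2, if_pos hi, sub_eq_zero] at hi_coeff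
    exact hi_coeff.symm
  · intro hσ i hir
    rw [coeff_stepsizeDefect hir, sub_eq_zero]
    split_ifs with hi
    · exact (hσ i hi).symm
    · obtain rfl : i = 0 := by simp only [mem_Icc, not_and_or] at hi; omega
      simp

/-- Invariance of the step-size equations `x_{α+1} − x_α − εh_α = o(ε^r)` under the
approximate operator `X = ∑_k εᵏXₖ`, with the differences `ξₖ(x_{α+1},u_{α+1}) −
ξₖ(x_α,u_α)` expanded as `∑_{m=1}^r ((εh)^m/m!) Dᵐξₖ + o(ε^r)` (here `d k m` denotes
`Dᵐξₖ(x_α,u_α)` and `σ k` denotes `σ_{k,α}`), is equivalent to the coefficient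
identities `σ_{i−1} = ∑_{l=1}^i (h^l/l!) Dˡξ_{i−l}` for `1 ≤ i ≤ r`. -/
theorem stepsize_prolongation_characterization
    (r : ℕ) (hr : 1 ≤ r) (h : ℝ) (d : ℕ → ℕ → ℝ) (σ : ℕ → ℝ) :
    Tendsto (fun ε : ℝ =>
        ((∑ k ∈ Finset.range (r + 1), ε ^ k *
            (∑ m ∈ Finset.Icc 1 r, (ε * h) ^ m / (Nat.factorial m : ℝ) * d k m))
          - ∑ k ∈ Finset.Icc 1 r, ε ^ k * σ (k - 1)) / ε ^ r)
      (nhdsWithin 0 {0}ᶜ) (nhds 0)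
    ↔
    (∀ i ∈ Finset.Icc 1 r,
      σ (i - 1) = ∑ l ∈ Finset.Icc 1 i, h ^ l / (Nat.factorial l : ℝ) * d (i - l) l) :=
  stepsize_prolongation_characterization_general r h d σ
end

section
/- Fix r ≥ 1 and, for 0 ≤ k ≤ r−1, suppose the prolonged components satisfy φₖ⁽ᴶ⁺¹⁾ = Dφₖ⁽ᴶ⁾ − u⁽ᴶ⁺¹⁾ Dξₖ for all J (the finite-difference prolongation formula). Then for every 1 ≤ l ≤ r and every J, ∑_{i=1}^{l} (hⁱ/i!) [ Dⁱφ_{l−i}⁽ᴶ⁾ − φ_{l−i}⁽ᴶ⁺ⁱ⁾ − ∑_{n=1}^{i} C(i, n−1) u⁽ᴶ⁺ⁿ⁾ D^{i−n+1} ξ_{l−i} ] = 0 as a polynomial identity in h. Conversely, if these identities hold for all 1 ≤ l ≤ r (for all h), then φₖ⁽ᴶ⁺¹⁾ = Dφₖ⁽ᴶ⁾ − u⁽ᴶ⁺¹⁾Dξₖ for all 0 ≤ k ≤ r−1. -/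
/-!
If `φ (J + 1) = D (φ J) - u (J + 1) * D ξ`, then the discrete characteristic
`ψ J = φ J - u (J + 1) * ξ` satisfies `D (ψ J) = ψ (J + 1)`, hence `Dⁱ (ψ J) = ψ (J + i)`.
Expanding `Dⁱ (u (J + 1) * ξ)` by the general Leibniz rule, with `Dᵐ (u (J + 1)) = u (J + 1 + m)`,
shows that every bracket in the polynomial identities vanishes. Conversely, the coefficient of
`h` in the identity for `l = k + 1` is exactly the `k`-th prolongation formula.
-/

open Finset Polynomial

theorem Module.End.pow_apply_of_apply_eq_succ {R M : Type*} [Semiring R] [AddCommMonoid M]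
    [Module R M] (f : Module.End R M) {ψ : ℕ → M} (hψ : ∀ J, f (ψ J) = ψ (J + 1)) (i J : ℕ) :
    (f ^ i) (ψ J) = ψ (J + i) := by
  induction i with
  | zero => rfl
  | succ i ih => rw [pow_succ', Module.End.mul_apply, ih, hψ, add_assoc]

namespace Derivation

variable {R A : Type*} [CommSemiring R] [CommRing A] [Algebra R A] (D : Derivation R A A)

theorem pow_succ_apply (n : ℕ) (a : A) :
    (D.toLinearMap ^ (n + 1)) a = D ((D.toLinearMap ^ n) a) := by
  rw [pow_succ', Module.End.mul_apply]; rfl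

theorem pow_apply_mul (n : ℕ) (a b : A) :
    (D.toLinearMap ^ n) (a * b) =
      ∑ m ∈ range (n + 1),
        (n.choose m : A) * ((D.toLinearMap ^ m) a * (D.toLinearMap ^ (n - m)) b) := by
  induction n with
  | zero => simp
  | succ n ih =>
    rw [sum_choose_succ_mul (fun i j => (D.toLinearMap ^ i) a * (D.toLinearMap ^ j) b),
      pow_succ_apply, ih, map_sum, ← sum_add_distrib]
    refine sum_congr rfl fun m hm => ?_
    rw [mem_range] at hm
    rw [leibniz, leibniz, D.map_natCast, smul_zero, add_zero, smul_eq_mul, smul_eq_mul, smul_eq_mul,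
      ← pow_succ_apply, ← pow_succ_apply, Nat.sub_add_comm (by omega)]
    ring

theorem pow_apply_sub_eq_sum_of_prolongation {u : ℕ → A} (hu : ∀ J, D (u J) = u (J + 1))
    {φ : ℕ → A} {ξ : A} (hφ : ∀ J, φ (J + 1) = D (φ J) - u (J + 1) * D ξ) (i J : ℕ) :
    (D.toLinearMap ^ i) (φ J) - φ (J + i) =
      ∑ n ∈ Icc 1 i, (i.choose (n - 1) : A) * u (J + n) * (D.toLinearMap ^ (i - n + 1)) ξ := by
  have hψ : ∀ J, D.toLinearMap (φ J - u (J + 1) * ξ) = φ (J + 1) - u (J + 1 + 1) * ξ := by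
    intro J
    rw [coeFn_coe, map_sub, leibniz, hu, hφ, smul_eq_mul, smul_eq_mul]
    ring
  have hDu := Module.End.pow_apply_of_apply_eq_succ D.toLinearMap hu
  calc (D.toLinearMap ^ i) (φ J) - φ (J + i)
      = (D.toLinearMap ^ i) (u (J + 1) * ξ) - u (J + 1 + i) * ξ := by
        have := Module.End.pow_apply_of_apply_eq_succ D.toLinearMap hψ i J
        rw [map_sub, add_right_comm] at this
        linear_combination this
    _ = ∑ m ∈ range i, (i.choose m : A) * (u (J + 1 + m) * (D.toLinearMap ^ (i - m)) ξ) := by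
        simp [pow_apply_mul, hDu, sum_range_succ]
    _ = _ := by
        rw [← Ico_add_one_right_eq_Icc, sum_Ico_eq_sum_range, Nat.add_sub_cancel]
        refine sum_congr rfl fun m hm => ?_
        rw [mem_range] at hm
        rw [Nat.add_sub_cancel_left, show i - (1 + m) + 1 = i - m by omega, ← add_assoc, mul_assoc]

end Derivation

theorem Polynomial.coeff_sum_smul_X_pow_mul_C {R A : Type*} [CommSemiring R] [Semiring A]
    [Algebra R A] (s : Finset ℕ) (c : ℕ → R) (a : ℕ → A) (j : ℕ) :
    (∑ i ∈ s, (c i • (X : A[X]) ^ i) * C (a i)).coeff j = if j ∈ s then c j • a j else 0 := by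
  simp only [finsetSum_coeff, smul_mul_assoc, coeff_smul, X_pow_mul, coeff_C_mul_X_pow]
  rw [sum_congr rfl fun i _ => (smul_ite ..).trans (by rw [smul_zero]), sum_ite_eq]

/-- Equivalence between the finite-difference prolongation formulae
`φₖ⁽ᴶ⁺¹⁾ = Dφₖ⁽ᴶ⁾ − u⁽ᴶ⁺¹⁾Dξₖ` (for `0 ≤ k ≤ r−1`) and the polynomial identities in
the step size `h` (eq:preliminary):
`∑_{i=1}^l (hⁱ/i!)[Dⁱφ_{l−i}⁽ᴶ⁾ − φ_{l−i}⁽ᴶ⁺ⁱ⁾ − ∑_{n=1}^i C(i,n−1)u⁽ᴶ⁺ⁿ⁾D^{i−n+1}ξ_{l−i}] = 0`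
for `1 ≤ l ≤ r`, stated in `Polynomial A` with `h` as the indeterminate. -/
theorem fd_prolongation_iff_preliminary
    {A : Type*} [CommRing A] [Algebra ℚ A]
    (D : Derivation ℚ A A) (u : ℕ → A)
    (hu : ∀ J : ℕ, D (u J) = u (J + 1))
    (r : ℕ) (hr : 1 ≤ r)
    (φ : ℕ → ℕ → A) (ξ : ℕ → A) :
    (∀ k : ℕ, k ≤ r - 1 → ∀ J : ℕ,
        φ k (J + 1) = D (φ k J) - u (J + 1) * D (ξ k))
    ↔
    (∀ l ∈ Finset.Icc 1 r, ∀ J : ℕ,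
        (∑ i ∈ Finset.Icc 1 l,
            (((Nat.factorial i : ℚ)⁻¹) • (Polynomial.X : Polynomial A) ^ i) *
              Polynomial.C
                ((D.toLinearMap ^ i) (φ (l - i) J) - φ (l - i) (J + i)
                  - ∑ n ∈ Finset.Icc 1 i,
                      (i.choose (n - 1) : A) * u (J + n) *
                        ((D.toLinearMap ^ (i - n + 1)) (ξ (l - i))))
          = 0)) := by
  constructor
  · intro hφ l hl J
    refine sum_eq_zero fun i hi => ?_
    rw [mem_Icc] at hl hi
    rw [sub_eq_zero.mpr (D.pow_apply_sub_eq_sum_of_prolongation hu (hφ (l - i) (by omega)) i J),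
      map_zero, mul_zero]
  · intro hpoly k hk J
    have hk1 : 1 ∈ Icc 1 (k + 1) := by simp
    have hcoeff := congrArg (coeff · 1) (hpoly (k + 1) (mem_Icc.mpr ⟨by omega, by omega⟩) J)
    simp only [coeff_sum_smul_X_pow_mul_C, if_pos hk1, coeff_zero, Nat.factorial_one, Nat.cast_one,
      inv_one, one_smul, pow_one, add_tsub_cancel_right, Derivation.coeFn_coe, Icc_self,
      sum_singleton, tsub_self, Nat.choose_succ_self_right, zero_add, one_mul] at hcoeff
    linear_combination -hcoeff
end

section
/- Suppose X₀F = λF identically (where X₀ is a prolonged vector field on jet variables, F = F(x, y, y⁽¹⁾, …, y⁽ⁿ⁾), λ smooth), F does not depend on the parameters h_α, and L_α⁽¹⁾ is linear homogeneous in (h₁, …, h_{N−1}) with the group action on h_α given by σ₀,α = h_α Dξ₀. Then the pair of conditions (i) [X₁F + (X₀ + ∑_α σ₀,α ∂_{h_α})L_α⁽¹⁾ − λL_α⁽¹⁾]|_{F=0} = 0 and (ii) (X₁F)|_{F=0} does not depend on h_α, is equivalent to the pair: (X₀L_α⁽¹⁾ + (Dξ₀ − λ)L_α⁽¹⁾)|_{F=0}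 = 0 and (X₁F)|_{F=0} = 0. -/
open Finset

/-!
The first-order condition is affine in the step sizes `h`: by the Euler relation the action
`σ₀,α = h_α Dξ₀` contributes `Dξ₀ · L`, so on `F = 0` the condition reads `X₁F + S(h) = 0`
with `S(h) = X₀L + (Dξ₀ − λ)L` linear in `h`. An affine function vanishes identically
exactly when its constant term and its linear part both do.
-/

theorem forall_add_eq_zero_iff {M R : Type*} [Zero M] [AddZeroClass R] (c : R) (f : M → R)
    (hf : f 0 = 0) : (∀ h, c + f h = 0) ↔ c = 0 ∧ ∀ h, f h = 0 := by
  refine ⟨fun H => ?_, fun ⟨hc, hf'⟩ h => by rw [hc, hf', add_zero]⟩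
  have hc : c = 0 := by simpa [hf] using H 0
  exact ⟨hc, fun h => by simpa [hc] using H h⟩

theorem Finset.sum_mul_right_mul_eq_mul_sum {ι R : Type*} [CommSemiring R] (s : Finset ι)
    (h ℓ : ι → R) (c : R) : ∑ i ∈ s, (h i * c) * ℓ i = c * ∑ i ∈ s, h i * ℓ i := by
  rw [mul_sum]
  exact sum_congr rfl fun i _ => by ring

theorem first_order_condition_decomposition_general
    {Z : Type*} (n : ℕ)
    (F lam X1F Dξ₀ : Z → ℝ)
    (ℓ X0ℓ : Z → Fin n → ℝ) :
    (∀ z : Z, F z = 0 → ∀ h : Fin n → ℝ,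
        X1F z
          + (∑ α : Fin n, h α * X0ℓ z α
              + ∑ α : Fin n, (h α * Dξ₀ z) * ℓ z α)
          - lam z * ∑ α : Fin n, h α * ℓ z α = 0)
    ↔
    ((∀ z : Z, F z = 0 → ∀ h : Fin n → ℝ,
        ∑ α : Fin n, h α * X0ℓ z α
          + (Dξ₀ z - lam z) * ∑ α : Fin n, h α * ℓ z α = 0) ∧
      (∀ z : Z, F z = 0 → X1F z = 0)) := by
  set S : Z → (Fin n → ℝ) → ℝ := fun z h =>
    ∑ α, h α * X0ℓ z α + (Dξ₀ z - lam z) * ∑ α, h α * ℓ z α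
  have affine_in_h : ∀ z h, X1F z + (∑ α, h α * X0ℓ z α + ∑ α, (h α * Dξ₀ z) * ℓ z α)
      - lam z * ∑ α, h α * ℓ z α = X1F z + S z h := by
    intro z h
    rw [sum_mul_right_mul_eq_mul_sum]
    ring
  have split_at : ∀ z, (∀ h, X1F z + S z h = 0) ↔ X1F z = 0 ∧ ∀ h, S z h = 0 :=
    fun z => forall_add_eq_zero_iff _ _ (by simp [S])
  simp only [affine_in_h, split_at, imp_and, forall_and]
  exact and_comm

/-- Decomposition of the first-order invariance condition for the first differential
approximation into the stability condition (eq:oo) and the condition (eq:ooo) on the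
correction `X₁`. Here `Z` is the space of jet points; `L_α⁽¹⁾` is linear homogeneous
in the step sizes: `L z h = ∑_α h_α ℓ(z)_α` with `X₀L z h = ∑_α h_α (X₀ℓ)(z)_α`; the
action on the step sizes is `σ₀,α = h_α·Dξ₀`, so `∑_α σ₀,α ∂_{h_α}L = Dξ₀·L`. Given
that `X₀F = λF` identically and `X₁F` does not depend on the `h_α`, the full
first-order condition on `F = 0` is equivalent to the pair: the stability condition
`X₀L + (Dξ₀ − λ)L = 0` on `F = 0`, and `X₁F = 0` on `F = 0`. -/
theorem first_order_condition_decomposition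
    {Z : Type*} (n : ℕ)
    (F lam X1F Dξ₀ : Z → ℝ)
    (X0F : Z → ℝ)
    (ℓ X0ℓ : Z → Fin n → ℝ)
    (hexact : ∀ z, X0F z = lam z * F z) :
    (∀ z : Z, F z = 0 → ∀ h : Fin n → ℝ,
        X1F z
          + (∑ α : Fin n, h α * X0ℓ z α
              + ∑ α : Fin n, (h α * Dξ₀ z) * ℓ z α)
          - lam z * ∑ α : Fin n, h α * ℓ z α = 0)
    ↔
    ((∀ z : Z, F z = 0 → ∀ h : Fin n → ℝ,
        ∑ α : Fin n, h α * X0ℓ z α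
          + (Dξ₀ z - lam z) * ∑ α : Fin n, h α * ℓ z α = 0) ∧
      (∀ z : Z, F z = 0 → X1F z = 0)) :=
  first_order_condition_decomposition_general n F lam X1F Dξ₀ ℓ X0ℓ
end
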